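/- arXiv:math/0202305 — 3 statements merged into one kernel-verified Lean document; each statement's English description precedes it below -/
import Mathlib

section
/- Let E be a Banach space. If every bounded linear operator on E** is the adjoint of a bounded linear operator on E*, then E is reflexive. -/
noncomputable section

/-- A normed space is reflexive if the canonical embedding into its double dual
is surjective (it is always an isometry). -/
def IsReflexiveSpace (𝕜 E : Type*) [NontriviallyNormedField 𝕜] [NormedAddCommGroup E]
    [NormedSpace 𝕜 E] : Prop :=
  Function.Surjective (NormedSpace.inclusionInDoubleDual 𝕜 E)
/-- The Banach space adjoint of a bounded linear operator. -/
def dualTrans {𝕜 E F : Type*} [NontriviallyNormedField 𝕜] [SeminormedAddCommGroup E]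
    [NormedSpace 𝕜 E] [SeminormedAddCommGroup F] [NormedSpace 𝕜 F] (S : E →L[𝕜] F) :
    StrongDual 𝕜 F →L[𝕜] StrongDual 𝕜 E :=
  (ContinuousLinearMap.compL 𝕜 E F 𝕜).flip S

/-- The double (bidual) adjoint of a bounded linear operator. -/
def doubleTrans {𝕜 E F : Type*} [NontriviallyNormedField 𝕜] [SeminormedAddCommGroup E]
    [NormedSpace 𝕜 E] [SeminormedAddCommGroup F] [NormedSpace 𝕜 F] (S : E →L[𝕜] F) :
    StrongDual 𝕜 (StrongDual 𝕜 E) →L[𝕜] StrongDual 𝕜 (StrongDual 𝕜 F) :=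
  dualTrans (dualTrans S)

open NormedSpace

/-! If `E` is not reflexive, pick `Φ ∈ E** ∖ J(E)`; since `J(E)` is closed, Hahn–Banach gives
`θ ∈ E***` vanishing on `J(E)` with `θ Φ ≠ 0`, and the rank-one operator `θ ⊗ Φ` on `E**` is
nonzero but vanishes on `J(E)`. No adjoint `R*` can do that: `R* (J x) f = (R f) x`, so an adjoint
vanishing on `J(E)` comes from `R = 0`. -/

@[simp]
theorem dualTrans_apply {𝕜 E F : Type*} [NontriviallyNormedField 𝕜] [SeminormedAddCommGroup E]
    [NormedSpace 𝕜 E] [SeminormedAddCommGroup F] [NormedSpace 𝕜 F] (S : E →L[𝕜] F)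
    (g : StrongDual 𝕜 F) (x : E) : dualTrans S g x = g (S x) :=
  rfl

theorem dualTrans_eq_zero_of_forall_inclusionInDoubleDual_eq_zero {𝕜 E : Type*}
    [NontriviallyNormedField 𝕜] [SeminormedAddCommGroup E] [NormedSpace 𝕜 E]
    {R : StrongDual 𝕜 E →L[𝕜] StrongDual 𝕜 E}
    (hR : ∀ x : E, dualTrans R (inclusionInDoubleDual 𝕜 E x) = 0) : dualTrans R = 0 := by
  have hR0 : R = 0 := by
    ext f x
    simpa using congrArg (· f) (hR x)
  rw [hR0, dualTrans, map_zero]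

theorem Submodule.exists_strongDual_ne_zero_forall_eq_zero_of_notMem {𝕜 F : Type*} [RCLike 𝕜]
    [NormedAddCommGroup F] [NormedSpace 𝕜 F] {p : Submodule 𝕜 F} (hp : IsClosed (p : Set F))
    {v : F} (hv : v ∉ p) : ∃ θ : StrongDual 𝕜 F, θ v ≠ 0 ∧ ∀ y ∈ p, θ y = 0 := by
  have : IsClosed (p : Set F) := hp
  have hmk : p.mkQ v ≠ 0 := by simpa [Submodule.Quotient.mk_eq_zero] using hv
  obtain ⟨g, hg⟩ := SeparatingDual.exists_ne_zero (R := 𝕜) hmk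
  refine ⟨g.comp ⟨p.mkQ, continuous_quot_mk⟩, hg, fun y hy => ?_⟩
  change g (p.mkQ y) = 0
  rw [p.mkQ_apply, (Submodule.Quotient.mk_eq_zero p).2 hy, map_zero]

theorem isClosed_range_inclusionInDoubleDual (𝕜 E : Type*) [RCLike 𝕜] [SeminormedAddCommGroup E]
    [NormedSpace 𝕜 E] [CompleteSpace E] :
    IsClosed (Set.range (inclusionInDoubleDual 𝕜 E)) :=
  (inclusionInDoubleDualLi 𝕜 (E := E)).isometry.isUniformInducing.isComplete_range.isClosed

theorem exists_ne_zero_forall_inclusionInDoubleDual_eq_zero {𝕜 E : Type*} [RCLike 𝕜]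
    [NormedAddCommGroup E] [NormedSpace 𝕜 E] [CompleteSpace E] (hE : ¬IsReflexiveSpace 𝕜 E) :
    ∃ T : StrongDual 𝕜 (StrongDual 𝕜 E) →L[𝕜] StrongDual 𝕜 (StrongDual 𝕜 E),
      T ≠ 0 ∧ ∀ x : E, T (inclusionInDoubleDual 𝕜 E x) = 0 := by
  obtain ⟨Φ, hΦ⟩ := not_forall.1 hE
  let p : Submodule 𝕜 (StrongDual 𝕜 (StrongDual 𝕜 E)) :=
    LinearMap.range (inclusionInDoubleDual 𝕜 E).toLinearMap
  obtain ⟨θ, hθΦ, hθp⟩ := Submodule.exists_strongDual_ne_zero_forall_eq_zero_of_notMem (𝕜 := 𝕜)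
    (F := StrongDual 𝕜 (StrongDual 𝕜 E)) (p := p) (isClosed_range_inclusionInDoubleDual 𝕜 E) hΦ
  have hΦ0 : Φ ≠ 0 := fun h => hΦ ⟨0, by simp [h]⟩
  refine ⟨θ.smulRight Φ, fun hT => ?_, fun x => ?_⟩
  · exact smul_ne_zero hθΦ hΦ0 (by simpa using congrArg (· Φ) hT)
  · rw [ContinuousLinearMap.smulRight_apply, hθp (inclusionInDoubleDual 𝕜 E x) ⟨x, rfl⟩,
      zero_smul]

/-- Let `E` be a Banach space. If every bounded linear operator on `E**` is
the adjoint of a bounded linear operator on `E*`, then `E` is reflexive. -/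
theorem reflexive_of_every_operator_on_bidual_is_adjoint
    (E : Type*) [NormedAddCommGroup E] [NormedSpace ℂ E] [CompleteSpace E]
    (h : ∀ S : StrongDual ℂ (StrongDual ℂ E) →L[ℂ] StrongDual ℂ (StrongDual ℂ E),
      ∃ R : StrongDual ℂ E →L[ℂ] StrongDual ℂ E, S = dualTrans R) :
    IsReflexiveSpace ℂ E := by
  by_contra hE
  obtain ⟨T, hT0, hTJ⟩ := exists_ne_zero_forall_inclusionInDoubleDual_eq_zero hE
  obtain ⟨R, rfl⟩ := h T
  exact hT0 (dualTrans_eq_zero_of_forall_inclusionInDoubleDual_eq_zero hTJ)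
end
end

section
/- Let E be a normed space, and let T be a bounded finite rank operator on E. Then there is a bounded finite rank projection P on E such that PT = TP = T. -/
noncomputable section

/-- A bounded operator has finite rank if its range is finite-dimensional. -/
def IsFiniteRankOp {𝕜 E F : Type*} [NontriviallyNormedField 𝕜] [NormedAddCommGroup E]
    [NormedSpace 𝕜 E] [NormedAddCommGroup F] [NormedSpace 𝕜 F] (T : E →L[𝕜] F) : Prop :=
  FiniteDimensional 𝕜 (LinearMap.range (T : E →ₗ[𝕜] F))

/-!
The kernel of `T` is closed of finite codimension, hence has a closed complement; the projection
`R` onto it along `ker T` has finite rank and satisfies `T R = T`. By Hahn–Banach the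
finite-dimensional subspace `ran T + ran R` is the range of a bounded projection `Q`, and
`P = R + Q - R Q = 1 - (1 - R)(1 - Q)` works: `Q R = R` makes `P` idempotent with `Q P = P`
(so `P` has finite rank), `Q T = T` gives `P T = T`, and `T R = T` gives `T P = T`.
-/

section Ring

variable {A : Type*} [Ring A] {q r t : A}

theorem IsIdempotentElem.mul_add_sub_mul_of_mul_eq (hq : IsIdempotentElem q) (hqr : q * r = r) :
    q * (r + q - r * q) = r + q - r * q := by
  rw [mul_sub, mul_add, ← mul_assoc, hqr, hq.eq]

theorem IsIdempotentElem.add_sub_mul_of_mul_eq (hq : IsIdempotentElem q) (hqr : q * r = r) :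
    IsIdempotentElem (r + q - r * q) := by
  rw [IsIdempotentElem, sub_mul, add_mul, mul_assoc, hq.mul_add_sub_mul_of_mul_eq hqr]
  abel

theorem add_sub_mul_mul_eq_self_of_mul_eq (hqt : q * t = t) : (r + q - r * q) * t = t := by
  rw [sub_mul, add_mul, mul_assoc, hqt]
  abel

theorem mul_add_sub_mul_eq_self_of_mul_eq (htr : t * r = t) : t * (r + q - r * q) = t := by
  rw [mul_sub, mul_add, ← mul_assoc, htr]
  abel

end Ring

theorem IsFiniteRankOp.comp {𝕜 E F G : Type*} [NontriviallyNormedField 𝕜] [NormedAddCommGroup E]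
    [NormedSpace 𝕜 E] [NormedAddCommGroup F] [NormedSpace 𝕜 F] [NormedAddCommGroup G]
    [NormedSpace 𝕜 G] {A : F →L[𝕜] G} (hA : IsFiniteRankOp A) (B : E →L[𝕜] F) :
    IsFiniteRankOp (A ∘L B) :=
  have : FiniteDimensional 𝕜 (A : F →ₗ[𝕜] G).range := hA
  Submodule.finiteDimensional_of_le (S₂ := (A : F →ₗ[𝕜] G).range)
    (LinearMap.range_comp_le_range (B : E →ₗ[𝕜] F) (A : F →ₗ[𝕜] G))

theorem ContinuousLinearMap.IsIdempotentElem.mul_eq_of_range_le {R M : Type*} [Semiring R]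
    [TopologicalSpace M] [AddCommMonoid M] [Module R M] {q a : M →L[R] M}
    (hq : IsIdempotentElem q) (h : (a : M →ₗ[R] M).range ≤ (q : M →ₗ[R] M).range) :
    q * a = a :=
  coe_injective <|
    (LinearMap.IsIdempotentElem.comp_eq_right_iff (isIdempotentElem_toLinearMap_iff.mpr hq) _).mpr h

theorem ContinuousLinearMap.exists_finiteDimensional_range_comp_eq {𝕜 E F : Type*}
    [NontriviallyNormedField 𝕜] [CompleteSpace 𝕜] [AddCommGroup E] [TopologicalSpace E]
    [IsTopologicalAddGroup E] [Module 𝕜 E] [ContinuousSMul 𝕜 E] [AddCommGroup F]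
    [TopologicalSpace F] [Module 𝕜 F] [T2Space F] (f : E →L[𝕜] F) [FiniteDimensional 𝕜 f.range] :
    ∃ r : E →L[𝕜] E, FiniteDimensional 𝕜 (r : E →ₗ[𝕜] E).range ∧ f ∘L r = f := by
  obtain ⟨C, hC⟩ := f.ker_closedComplemented_of_finiteDimensional_range.exists_isTopCompl
  refine ⟨C.projectionL f.ker hC.symm, ?_, ?_⟩
  · have : FiniteDimensional 𝕜 (E ⧸ f.ker) :=
      f.toLinearMap.quotKerEquivRange.symm.finiteDimensional
    rw [Submodule.range_projectionL]
    exact (Submodule.quotientEquivOfIsCompl _ _ hC.isCompl).finiteDimensional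
  · ext x
    conv_rhs => rw [← Submodule.projectionL_add_projectionL_eq_self hC.symm x]
    have hker : f (f.ker.projectionL C hC x) = 0 := Submodule.projectionL_apply_mem hC x
    rw [map_add, hker, add_zero]
    rfl

theorem Submodule.exists_isIdempotentElem_range_eq {𝕜 E : Type*} [NontriviallyNormedField 𝕜]
    [IsRCLikeNormedField 𝕜] [AddCommGroup E] [TopologicalSpace E] [IsTopologicalAddGroup E]
    [Module 𝕜 E] [ContinuousSMul 𝕜 E] [T2Space E] [PolynormableSpace 𝕜 E]
    (G : Submodule 𝕜 E) [FiniteDimensional 𝕜 G] :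
    ∃ q : E →L[𝕜] E, IsIdempotentElem q ∧ (q : E →ₗ[𝕜] E).range = G := by
  obtain ⟨C, hC⟩ := (ClosedComplemented.of_finiteDimensional G).exists_isTopCompl
  exact ⟨G.projectionL C hC, isIdempotentElem_projectionL hC, range_projectionL hC⟩

/-- Let `E` be a normed space and let `T` be a bounded finite rank operator
on `E`. Then there is a bounded finite rank projection `P` on `E` with `PT = TP = T`. -/
theorem exists_finiteRank_projection_of_finiteRank
    (E : Type*) [NormedAddCommGroup E] [NormedSpace ℂ E]
    (T : E →L[ℂ] E) (hT : IsFiniteRankOp T) :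
    ∃ P : E →L[ℂ] E, IsFiniteRankOp P ∧ P * P = P ∧ P * T = T ∧ T * P = T := by
  have : FiniteDimensional ℂ (T : E →ₗ[ℂ] E).range := hT
  obtain ⟨R, hR, hTR⟩ := T.exists_finiteDimensional_range_comp_eq
  obtain ⟨Q, hQ, hQG⟩ :=
    ((T : E →ₗ[ℂ] E).range ⊔ (R : E →ₗ[ℂ] E).range).exists_isIdempotentElem_range_eq
  have hQR : Q * R = R :=
    ContinuousLinearMap.IsIdempotentElem.mul_eq_of_range_le hQ (hQG ▸ le_sup_right)
  have hQT : Q * T = T :=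
    ContinuousLinearMap.IsIdempotentElem.mul_eq_of_range_le hQ (hQG ▸ le_sup_left)
  have hQ_finiteRank : IsFiniteRankOp Q := by
    rw [IsFiniteRankOp, hQG]
    infer_instance
  refine ⟨R + Q - R * Q, ?_, hQ.add_sub_mul_of_mul_eq hQR,
    add_sub_mul_mul_eq_self_of_mul_eq hQT, mul_add_sub_mul_eq_self_of_mul_eq hTR⟩
  rw [← hQ.mul_add_sub_mul_of_mul_eq hQR]
  exact hQ_finiteRank.comp _
end
end

section
/- Let E be a normed space, and let F be a finite-dimensional linear subspace of F(E), the bounded finite rank operators on E. Then there is a bounded finite rank projection p on E such that F ⊆ p F(E) p, i.e. every T ∈ F satisfies T = p S p for some S ∈ F(E). -/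
/-
Let `K` be the common kernel and `V` the joint range of a finite spanning set of `F`; `K` is
closed of finite codimension and `V` is finite-dimensional. Shrinking `K` by a closed complement
of `K ⊓ V` (Hahn–Banach) gives a closed finite-codimensional `K' ≤ K` disjoint from `V`. Any
algebraic complement `N ⊇ V` of `K'` is then a topological one, and the projection onto `N` along
`K'` satisfies `p T p = T` on the spanning set, hence on all of `F`.
-/

noncomputable section

open Submodule

theorem ContinuousLinearMap.IsIdempotentElem.mul_mul_eq_of_ker_le_of_range_le {R M : Type*}
    [Ring R] [AddCommGroup M] [Module R M] [TopologicalSpace M] {p T : M →L[R] M}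
    (hp : IsIdempotentElem p)
    (hker : LinearMap.ker (p : M →ₗ[R] M) ≤ LinearMap.ker (T : M →ₗ[R] M))
    (hrange : LinearMap.range (T : M →ₗ[R] M) ≤ LinearMap.range (p : M →ₗ[R] M)) :
    p * T * p = T := by
  have hp' : IsIdempotentElem (p : M →ₗ[R] M) := isIdempotentElem_toLinearMap_iff.mpr hp
  have hpT := (LinearMap.IsIdempotentElem.comp_eq_right_iff hp' (T : M →ₗ[R] M)).mpr hrange
  have hTp := (LinearMap.IsIdempotentElem.comp_eq_left_iff hp' (T : M →ₗ[R] M)).mpr hker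
  ext x
  change p (T (p x)) = T x
  rw [show T (p x) = T x from LinearMap.congr_fun hTp x]
  exact LinearMap.congr_fun hpT x

section

variable {𝕜 E : Type*} [RCLike 𝕜] [NormedAddCommGroup E] [NormedSpace 𝕜 E]

theorem Submodule.exists_le_isClosed_coFG_disjoint {K V : Submodule 𝕜 E}
    (hK : IsClosed (K : Set E)) (hKcofg : K.CoFG) [FiniteDimensional 𝕜 V] :
    ∃ K' ≤ K, IsClosed (K' : Set E) ∧ K'.CoFG ∧ Disjoint K' V := by
  obtain ⟨C, hC, hKVC⟩ :=
    (ClosedComplemented.of_finiteDimensional (K ⊓ V)).exists_isClosed_isCompl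
  refine ⟨K ⊓ C, inf_le_left, hK.inter hC, hKcofg.inf (FG.cofg_of_isCompl hKVC ?_), ?_⟩
  · exact Module.Finite.iff_fg.mp inferInstance
  · rw [disjoint_iff, inf_right_comm]
    exact disjoint_iff.mp hKVC.disjoint

theorem exists_finiteRank_isIdempotentElem_ker_le_and_le_range {K V : Submodule 𝕜 E}
    (hK : IsClosed (K : Set E)) (hKcofg : K.CoFG) [FiniteDimensional 𝕜 V] :
    ∃ p : E →L[𝕜] E, IsFiniteRankOp p ∧ IsIdempotentElem p ∧
      LinearMap.ker (p : E →ₗ[𝕜] E) ≤ K ∧ V ≤ LinearMap.range (p : E →ₗ[𝕜] E) := by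
  obtain ⟨K', hK'K, hK', hK'cofg, hK'V⟩ := exists_le_isClosed_coFG_disjoint hK hKcofg (V := V)
  obtain ⟨N, hVN, hNK'⟩ := hK'V.symm.exists_isCompl
  have hN : IsTopCompl N K' := (hNK'.symm.isTopCompl_of_finiteDimensional_quotient hK').symm
  refine ⟨N.projectionL K' hN, ?_, isIdempotentElem_projectionL hN, ?_, ?_⟩
  · have : FiniteDimensional 𝕜 N := Module.Finite.iff_fg.mpr (hK'cofg.fg_of_isCompl hNK'.symm)
    rwa [IsFiniteRankOp, toLinearMap_projectionL, range_projection]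
  · rwa [toLinearMap_projectionL, ker_projection]
  · rwa [toLinearMap_projectionL, range_projection]

theorem exists_finiteRank_isIdempotentElem_mul_mul_eq (S : Finset (E →L[𝕜] E))
    (hS : ∀ T ∈ S, IsFiniteRankOp T) :
    ∃ p : E →L[𝕜] E, IsFiniteRankOp p ∧ IsIdempotentElem p ∧
      ∀ T ∈ span 𝕜 (S : Set (E →L[𝕜] E)), p * T * p = T := by
  set K := ⨅ T ∈ S, LinearMap.ker (T : E →ₗ[𝕜] E)
  set V := ⨆ T ∈ S, LinearMap.range (T : E →ₗ[𝕜] E)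
  have hK : IsClosed (K : Set E) := by
    simp only [K, Submodule.coe_iInf]
    exact isClosed_iInter fun T => isClosed_iInter fun _ => T.isClosed_ker
  have hKcofg : K.CoFG := by
    have := CoFG.sInf (s := S.image fun T : E →L[𝕜] E => LinearMap.ker (T : E →ₗ[𝕜] E))
      (by simpa using fun T hT => range_fg_iff_ker_cofg.mp (Module.Finite.iff_fg.mp (hS T hT)))
    simpa [K, sInf_image] using this
  have : FiniteDimensional 𝕜 V :=
    Module.Finite.iff_fg.mpr (fg_biSup S _ fun T hT => Module.Finite.iff_fg.mp (hS T hT))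
  obtain ⟨p, hp, hpp, hker, hrange⟩ :=
    exists_finiteRank_isIdempotentElem_ker_le_and_le_range hK hKcofg (V := V)
  have hSfix : (S : Set (E →L[𝕜] E)) ⊆
      LinearMap.eqLocus (LinearMap.mulLeft 𝕜 p ∘ₗ LinearMap.mulRight 𝕜 p) LinearMap.id :=
    fun T hT => by
      have hTker : LinearMap.ker (p : E →ₗ[𝕜] E) ≤ LinearMap.ker (T : E →ₗ[𝕜] E) :=
        hker.trans (biInf_le _ hT)
      have hTrange : LinearMap.range (T : E →ₗ[𝕜] E) ≤ LinearMap.range (p : E →ₗ[𝕜] E) :=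
        (le_biSup (fun T : E →L[𝕜] E => LinearMap.range (T : E →ₗ[𝕜] E)) hT).trans hrange
      simpa [mul_assoc] using
        ContinuousLinearMap.IsIdempotentElem.mul_mul_eq_of_ker_le_of_range_le hpp hTker hTrange
  refine ⟨p, hp, hpp, fun T hT => ?_⟩
  simpa [mul_assoc] using span_le.mpr hSfix hT

end

/-- Let `E` be a normed space and let `F` be a finite-dimensional linear
subspace of the bounded finite rank operators on `E`. Then there is a bounded finite rank
projection `p` on `E` such that `F ⊆ p F(E) p`. -/
theorem exists_finiteRank_projection_of_finiteDimensional_subspace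
    (E : Type*) [NormedAddCommGroup E] [NormedSpace ℂ E]
    (F : Submodule ℂ (E →L[ℂ] E)) (hfin : FiniteDimensional ℂ F)
    (hF : ∀ T ∈ F, IsFiniteRankOp T) :
    ∃ p : E →L[ℂ] E, IsFiniteRankOp p ∧ p * p = p ∧
      ∀ T ∈ F, ∃ S : E →L[ℂ] E, IsFiniteRankOp S ∧ T = p * S * p := by
  obtain ⟨S, rfl⟩ := Module.Finite.iff_fg.mp hfin
  obtain ⟨p, hp, hpp, hpS⟩ :=
    exists_finiteRank_isIdempotentElem_mul_mul_eq S fun T hT => hF T (subset_span hT)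
  exact ⟨p, hp, hpp, fun T hT => ⟨T, hF T hT, (hpS T hT).symm⟩⟩
end
end
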